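/- Define δ₁(u,c,p,m) := 2c(1 - c^{2m-2})u + 2pc(1 - c^{2m-1}) + c²(1 - c^{2m-3}). Then δ₁(u,c,p,m) ≥ 0 for all u ≥ 0, c ∈ (0,1), m ≥ 1, and p ∈ [p_*(m), 1), where p_*(m) := (2m+1 - √(4(m-1)(m+2)+1))/(4(2m-1)). -/

import Mathlib

/-!
Only the last term of `δ₁` can be negative, and only when `a := 2m - 1 < 2`. Dividing the
last two terms by `c`, it suffices that `2p (1 - c^a) + c - c^(a-1) ≥ 0`. The bound `p ≥ p_*(m)`
gives `2p a ≥ 2 - a`, which reduces this to `g(c) ≥ 0` for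
`g(x) = (2 - a) + a x - a x^(a-1) - (2 - a) x^a`. Now `g(1) = 0`, and `g' ≤ 0` on `(0, ∞)` by the
weighted AM-GM inequality for `x^(a-2)` and `x^(a-1)` with weights `a - 1` and `2 - a`, whose
weighted geometric mean is `1`.
-/

open Real Set

lemma one_le_weighted_mean_rpow {a x : ℝ} (ha₁ : 1 ≤ a) (ha₂ : a ≤ 2) (hx : 0 < x) :
    1 ≤ (a - 1) * x ^ (a - 2) + (2 - a) * x ^ (a - 1) :=
  calc (1 : ℝ) = (x ^ (a - 2)) ^ (a - 1) * (x ^ (a - 1)) ^ (2 - a) := by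
        rw [← rpow_mul hx.le, ← rpow_mul hx.le, ← rpow_add hx,
          show (a - 2) * (a - 1) + (a - 1) * (2 - a) = 0 by ring, rpow_zero]
    _ ≤ _ := geom_mean_le_arith_mean2_weighted (by linarith) (by linarith)
        (rpow_nonneg hx.le _) (rpow_nonneg hx.le _) (by ring)

lemma antitoneOn_two_sub_add_mul_sub_rpow {a : ℝ} (ha₁ : 1 ≤ a) (ha₂ : a ≤ 2) :
    AntitoneOn (fun x : ℝ => (2 - a) + a * x - a * x ^ (a - 1) - (2 - a) * x ^ a) (Ioi 0) := by
  have hderiv : ∀ x ∈ Ioi (0 : ℝ),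
      HasDerivAt (fun x : ℝ => (2 - a) + a * x - a * x ^ (a - 1) - (2 - a) * x ^ a)
        (a * (1 - ((a - 1) * x ^ (a - 2) + (2 - a) * x ^ (a - 1)))) x := by
    intro x hx
    have hpow₁ := hasDerivAt_rpow_const (p := a - 1) (Or.inl (ne_of_gt hx))
    have hpow₂ := hasDerivAt_rpow_const (p := a) (Or.inl (ne_of_gt hx))
    refine ((((hasDerivAt_id x).const_mul a).const_add (2 - a)).sub
      (hpow₁.const_mul a) |>.sub (hpow₂.const_mul (2 - a))).congr_deriv ?_
    rw [show a - 1 - 1 = a - 2 by ring]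
    ring
  refine antitoneOn_of_hasDerivWithinAt_nonpos (convex_Ioi 0)
    (fun x hx => (hderiv x hx).continuousAt.continuousWithinAt)
    (fun x hx => (hderiv x (interior_subset hx)).hasDerivWithinAt) fun x hx => ?_
  rw [interior_Ioi] at hx
  nlinarith [one_le_weighted_mean_rpow ha₁ ha₂ hx]

lemma mul_rpow_sub_one_add_le {a c : ℝ} (ha₁ : 1 ≤ a) (ha₂ : a ≤ 2) (hc₀ : 0 < c)
    (hc₁ : c ≤ 1) : a * c ^ (a - 1) + (2 - a) * c ^ a ≤ (2 - a) + a * c := by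
  have := antitoneOn_two_sub_add_mul_sub_rpow ha₁ ha₂ hc₀ (mem_Ioi.2 one_pos) hc₁
  simp only [one_rpow] at this
  linarith

lemma mul_one_sub_rpow_add_sub_rpow_sub_one_nonneg {a q c : ℝ} (ha : 1 ≤ a) (hq₀ : 0 ≤ q)
    (hq : 2 - a ≤ q * a) (hc₀ : 0 < c) (hc₁ : c ≤ 1) :
    0 ≤ q * (1 - c ^ a) + (c - c ^ (a - 1)) := by
  have hca : c ^ a ≤ 1 := rpow_le_one hc₀.le hc₁ (by linarith)
  rcases le_total a 2 with ha₂ | ha₂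
  · have hgap := mul_rpow_sub_one_add_le ha ha₂ hc₀ hc₁
    have : 0 ≤ a * (q * (1 - c ^ a) + (c - c ^ (a - 1))) := by nlinarith
    exact nonneg_of_mul_nonneg_right this (by linarith)
  · have : c ^ (a - 1) ≤ c := by
      simpa using rpow_le_rpow_of_exponent_ge hc₀ hc₁ (by linarith : 1 ≤ a - 1)
    exact add_nonneg (mul_nonneg hq₀ (by linarith)) (by linarith)

noncomputable def pStar (m : ℝ) : ℝ :=
  (2 * m + 1 - Real.sqrt (4 * (m - 1) * (m + 2) + 1)) / (4 * (2 * m - 1))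

lemma pStar_pos {m : ℝ} (hm : 1 ≤ m) : 0 < pStar m := by
  have : √(4 * (m - 1) * (m + 2) + 1) < 2 * m + 1 := by
    rw [sqrt_lt' (by linarith)]
    nlinarith
  exact div_pos (by linarith) (by linarith)

lemma three_sub_two_mul_le_pStar {m : ℝ} (hm : 1 ≤ m) :
    3 - 2 * m ≤ 2 * pStar m * (2 * m - 1) := by
  have hsqrt : √(4 * (m - 1) * (m + 2) + 1) ≤ 6 * m - 5 := by
    rw [sqrt_le_left (by linarith)]
    nlinarith [sq_nonneg (m - 1)]
  have hpStar : 2 * pStar m * (2 * m - 1) = (2 * m + 1 - √(4 * (m - 1) * (m + 2) + 1)) / 2 := by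
    have : 2 * m - 1 ≠ 0 := by linarith
    rw [pStar]
    field_simp
    ring
  linarith

theorem delta1_nonneg_general (u c p m : ℝ) (hu : 0 ≤ u) (hc : c ∈ Set.Ioo (0 : ℝ) 1)
    (hm : 1 ≤ m)
    (hp : (2 * m + 1 - Real.sqrt (4 * (m - 1) * (m + 2) + 1)) / (4 * (2 * m - 1)) ≤ p) :
    0 ≤ 2 * c * (1 - c ^ (2 * m - 2)) * u + 2 * p * c * (1 - c ^ (2 * m - 1))
        + c ^ 2 * (1 - c ^ (2 * m - 3)) := by
  obtain ⟨hc₀, hc₁⟩ := hc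
  change pStar m ≤ p at hp
  have hu_term : 0 ≤ 2 * c * (1 - c ^ (2 * m - 2)) * u := by
    have := rpow_le_one hc₀.le hc₁.le (by linarith : 0 ≤ 2 * m - 2)
    have : 0 ≤ 1 - c ^ (2 * m - 2) := by linarith
    positivity
  have hrest := mul_one_sub_rpow_add_sub_rpow_sub_one_nonneg (a := 2 * m - 1) (q := 2 * p)
    (by linarith) (by linarith [pStar_pos hm])
    (by nlinarith [three_sub_two_mul_le_pStar hm]) hc₀ hc₁.le
  have hsplit : c ^ 2 * c ^ (2 * m - 3) = c * c ^ (2 * m - 1 - 1) := by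
    rw [show 2 * m - 1 - 1 = 1 + (2 * m - 3) by ring, rpow_add hc₀, rpow_one]
    ring
  calc 0 ≤ 2 * c * (1 - c ^ (2 * m - 2)) * u
        + c * (2 * p * (1 - c ^ (2 * m - 1)) + (c - c ^ (2 * m - 1 - 1))) :=
        add_nonneg hu_term (mul_nonneg hc₀.le hrest)
    _ = _ := by rw [mul_sub (c ^ 2), hsplit]; ring

/-- `δ₁(u,c,p,m) ≥ 0` for `u ≥ 0`, `c ∈ (0,1)`, `m ≥ 1`, `p ∈ [p_*(m), 1)`. -/
theorem delta1_nonneg (u c p m : ℝ) (hu : 0 ≤ u) (hc : c ∈ Set.Ioo (0 : ℝ) 1)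
    (hm : 1 ≤ m)
    (hp : (2 * m + 1 - Real.sqrt (4 * (m - 1) * (m + 2) + 1)) / (4 * (2 * m - 1)) ≤ p)
    (hp1 : p < 1) :
    0 ≤ 2 * c * (1 - c ^ (2 * m - 2)) * u + 2 * p * c * (1 - c ^ (2 * m - 1))
        + c ^ 2 * (1 - c ^ (2 * m - 3)) :=
  delta1_nonneg_general u c p m hu hc hm hp
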